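/- If X, Y are independent G-valued random variables and (X_0,Y_0),…,(X_n,Y_n) are independent copies of (X,Y), with S_i := X_i + Y_i, then H(S_0 + S_1 + … + S_n) ≤ (2n+1)·H(X+Y) − n·H(X) − n·H(Y). -/

import Mathlib

open Real
open scoped BigOperators Pointwise Classical

/-- A finitely supported probability space. -/
structure FinProb (Ω : Type*) [Fintype Ω] where
  p : Ω → ℝ
  nonneg : ∀ ω, 0 ≤ p ω
  sum_one : ∑ ω, p ω = 1

/-- Probability that the random variable `X` takes the value `s`. -/
noncomputable def prob {Ω S : Type*} [Fintype Ω] (μ : FinProb Ω) (X : Ω → S) (s : S) : ℝ :=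
  ∑ ω, if X ω = s then μ.p ω else 0

/-- Shannon entropy of a discrete random variable. -/
noncomputable def entropy {Ω S : Type*} [Fintype Ω] (μ : FinProb Ω) (X : Ω → S) : ℝ :=
  ∑ s ∈ Finset.univ.image X, Real.negMulLog (prob μ X s)

/-- Conditional Shannon entropy `H(X|Y) = H(X,Y) - H(Y)`. -/
noncomputable def condEntropy {Ω S T : Type*} [Fintype Ω] (μ : FinProb Ω)
    (X : Ω → S) (Y : Ω → T) : ℝ :=
  entropy μ (fun ω => (X ω, Y ω)) - entropy μ Y

/-- The essential range of a random variable: values attained with positive probability. -/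
noncomputable def rangeF {Ω S : Type*} [Fintype Ω] (μ : FinProb Ω) (X : Ω → S) : Finset S :=
  (Finset.univ.image X).filter (fun s => prob μ X s ≠ 0)

/-- Two random variables (on possibly different spaces) have the same distribution. -/
def IdentDist {Ω Ω' S : Type*} [Fintype Ω] [Fintype Ω'] (μ : FinProb Ω) (X : Ω → S)
    (μ' : FinProb Ω') (Y : Ω' → S) : Prop :=
  ∀ s, prob μ X s = prob μ' Y s

/-- Independence of two random variables. -/
def IndepRV {Ω S T : Type*} [Fintype Ω] (μ : FinProb Ω) (X : Ω → S) (Y : Ω → T) : Prop :=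
  ∀ s t, prob μ (fun ω => (X ω, Y ω)) (s, t) = prob μ X s * prob μ Y t

/-- Joint independence of a finite family of random variables. -/
def IndepFam {Ω ι : Type*} [Fintype Ω] [Fintype ι] {S : ι → Type*}
    (μ : FinProb Ω) (X : ∀ i, Ω → S i) : Prop :=
  ∀ f : ∀ i, S i, prob μ (fun ω i => X i ω) f = ∏ i, prob μ (X i) (f i)

/-- `X` and `Y` are conditionally independent given `W`. -/
def CondIndepGiven {Ω S T U : Type*} [Fintype Ω] (μ : FinProb Ω)
    (X : Ω → S) (Y : Ω → T) (W : Ω → U) : Prop :=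
  ∀ s t u, prob μ (fun ω => (X ω, Y ω, W ω)) (s, t, u) * prob μ W u
    = prob μ (fun ω => (X ω, W ω)) (s, u) * prob μ (fun ω => (Y ω, W ω)) (t, u)

/-- `Y` is determined by `X` (almost surely). -/
def Determines {Ω S T : Type*} [Fintype Ω] (μ : FinProb Ω) (X : Ω → S) (Y : Ω → T) : Prop :=
  ∃ f : S → T, ∀ ω, μ.p ω ≠ 0 → Y ω = f (X ω)

/-- The entropy transport distance between the distributions of `X` and `Y`:
the infimum of `H(Z)` over random variables `Z` (coupled with a copy `X'` of `X`)
such that `X' + Z` is distributed as `Y`. -/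
noncomputable def transDist {Ω₁ Ω₂ G : Type*} [Fintype Ω₁] [Fintype Ω₂] [AddCommGroup G]
    (μ : FinProb Ω₁) (X : Ω₁ → G) (ν : FinProb Ω₂) (Y : Ω₂ → G) : ℝ :=
  sInf {h : ℝ | ∃ (n : ℕ) (μ' : FinProb (Fin n)) (X' Z : Fin n → G),
    IdentDist μ' X' μ X ∧ IdentDist μ' (fun ω => X' ω + Z ω) ν Y ∧ entropy μ' Z = h}

/-- Conditioning a finitely supported probability space on an event `E`
(returning `μ` unchanged if `E` has zero probability). -/
noncomputable def condFinProb {Ω : Type*} [Fintype Ω] (μ : FinProb Ω) (E : Ω → Prop) :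
    FinProb Ω :=
  if h : 0 < ∑ ω, if E ω then μ.p ω else 0 then
    { p := fun ω => if E ω then μ.p ω / (∑ ω', if E ω' then μ.p ω' else 0) else 0
      nonneg := fun ω => by
        split
        · exact div_nonneg (μ.nonneg ω) h.le
        · exact le_refl 0
      sum_one := by
        have h' : ∀ ω, (if E ω then μ.p ω / (∑ ω', if E ω' then μ.p ω' else 0) else 0)
            = (if E ω then μ.p ω else 0) / (∑ ω', if E ω' then μ.p ω' else 0) := by
          intro ω; split <;> simp
        rw [Finset.sum_congr rfl (fun ω _ => h' ω), ← Finset.sum_div, div_self h.ne'] }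
  else μ

/-
Write `S₀ + ⋯ + Sₙ` as the chain `X₀ + Y₀ + X₁ + (Y₁ + S₂ + ⋯ + Sₙ)` of four mutually
independent summands. Applying the Kaimanovich–Vershik inequality
`H(A + B + C) + H(B) ≤ H(A + B) + H(B + C)` (a consequence of the submodularity of entropy)
twice along this chain gives
`H(S₀ + ⋯ + Sₙ) ≤ H(X₀ + Y₀) + H(Y₀ + X₁) - H(Y₀) - H(X₁) + H(S₁ + ⋯ + Sₙ)`.
Both `X₀ + Y₀` and `Y₀ + X₁` are distributed as `X + Y`, so each of the `n` steps of the induction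
costs `2 H(X + Y) - H(X) - H(Y)`.
-/

section Prob

variable {Ω S T U : Type*} [Fintype Ω] (μ : FinProb Ω)

lemma mem_image_univ_self (X : Ω → S) (ω : Ω) : X ω ∈ Finset.univ.image X :=
  Finset.mem_image_of_mem X (Finset.mem_univ ω)

lemma prob_nonneg (X : Ω → S) (s : S) : 0 ≤ prob μ X s :=
  Finset.sum_nonneg fun ω _ => by split_ifs <;> simp [μ.nonneg ω]

lemma p_le_prob_apply (X : Ω → S) (ω : Ω) : μ.p ω ≤ prob μ X (X ω) :=
  calc μ.p ω = if X ω = X ω then μ.p ω else 0 := (if_pos rfl).symm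
    _ ≤ prob μ X (X ω) := Finset.single_le_sum (f := fun ω' => if X ω' = X ω then μ.p ω' else 0)
        (fun ω' _ => by split_ifs <;> simp [μ.nonneg ω']) (Finset.mem_univ ω)

lemma prob_apply_pos {X : Ω → S} {ω : Ω} (hω : 0 < μ.p ω) : 0 < prob μ X (X ω) :=
  hω.trans_le (p_le_prob_apply μ X ω)

lemma sum_prob_mul {X : Ω → S} {F : Finset S} (hF : ∀ ω, X ω ∈ F) (f : S → ℝ) :
    ∑ s ∈ F, prob μ X s * f s = ∑ ω, μ.p ω * f (X ω) := by
  simp only [prob, Finset.sum_mul, ite_mul, zero_mul]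
  rw [Finset.sum_comm]
  exact Finset.sum_congr rfl fun ω _ => by simp [Finset.sum_ite_eq, hF]

lemma sum_prob {X : Ω → S} {F : Finset S} (hF : ∀ ω, X ω ∈ F) : ∑ s ∈ F, prob μ X s = 1 := by
  simpa [μ.sum_one] using sum_prob_mul μ hF fun _ => 1

lemma sum_prob_pair_left {A : Ω → S} {B : Ω → T} {F : Finset S} (hF : ∀ ω, A ω ∈ F) (t : T) :
    ∑ s ∈ F, prob μ (fun ω => (A ω, B ω)) (s, t) = prob μ B t := by
  simp only [prob]
  rw [Finset.sum_comm]
  exact Finset.sum_congr rfl fun ω _ => by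
    by_cases h : B ω = t <;> simp [h, Finset.sum_ite_eq, hF]

lemma prob_comp {X : Ω → S} {F : Finset S} (hF : ∀ ω, X ω ∈ F) (f : S → T) (t : T) :
    prob μ (fun ω => f (X ω)) t = ∑ s ∈ F, prob μ X s * if f s = t then 1 else 0 := by
  rw [sum_prob_mul μ hF]
  simp [prob]

lemma prob_comp_of_injective (X : Ω → S) {f : S → T} (hf : f.Injective) (s : S) :
    prob μ (fun ω => f (X ω)) (f s) = prob μ X s := by
  simp [prob, hf.eq_iff]

lemma entropy_eq_sum_mul_neg_log (X : Ω → S) :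
    entropy μ X = ∑ ω, μ.p ω * -Real.log (prob μ X (X ω)) := by
  rw [entropy, ← sum_prob_mul μ (mem_image_univ_self X)
    fun s => -Real.log (prob μ X s)]
  simp [Real.negMulLog]

lemma entropy_eq_sum_negMulLog {X : Ω → S} {F : Finset S} (hF : ∀ ω, X ω ∈ F) :
    entropy μ X = ∑ s ∈ F, Real.negMulLog (prob μ X s) := by
  rw [entropy_eq_sum_mul_neg_log, ← sum_prob_mul μ hF fun s => -Real.log (prob μ X s)]
  simp [Real.negMulLog]

lemma entropy_comp_of_injective (X : Ω → S) {f : S → T} (hf : f.Injective) :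
    entropy μ (fun ω => f (X ω)) = entropy μ X := by
  simp_rw [entropy_eq_sum_mul_neg_log, prob_comp_of_injective μ X hf]

lemma entropy_pair_of_indep {A : Ω → S} {B : Ω → T} (h : IndepRV μ A B) :
    entropy μ (fun ω => (A ω, B ω)) = entropy μ A + entropy μ B := by
  simp_rw [entropy_eq_sum_mul_neg_log, ← Finset.sum_add_distrib]
  refine Finset.sum_congr rfl fun ω _ => ?_
  rcases (μ.nonneg ω).eq_or_lt with hω | hω
  · simp [← hω]
  · rw [h, Real.log_mul (prob_apply_pos μ hω).ne' (prob_apply_pos μ hω).ne']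
    ring

lemma entropy_le_sum_mul_neg_log {X : Ω → S} {F : Finset S} (hF : ∀ ω, X ω ∈ F) {q : S → ℝ}
    (hq : ∀ s, 0 ≤ q s) (hq_sum : ∑ s ∈ F, q s ≤ 1) (hq_pos : ∀ ω, 0 < μ.p ω → 0 < q (X ω)) :
    entropy μ X ≤ ∑ ω, μ.p ω * -Real.log (q (X ω)) := by
  set p := prob μ X
  have hω : ∀ ω, μ.p ω * -Real.log (p (X ω))
      ≤ μ.p ω * -Real.log (q (X ω)) + μ.p ω * (q (X ω) / p (X ω) - 1) := by
    intro ω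
    rcases (μ.nonneg ω).eq_or_lt with h | h
    · simp [← h]
    · have hp : 0 < p (X ω) := prob_apply_pos μ h
      have hlog := Real.log_le_sub_one_of_pos (div_pos (hq_pos ω h) hp)
      rw [Real.log_div (hq_pos ω h).ne' hp.ne'] at hlog
      nlinarith
  have hs : ∀ s ∈ F, p s * (q s / p s - 1) ≤ q s - p s := by
    intro s _
    rcases (prob_nonneg μ X s).eq_or_lt with h | h
    · simp [p, ← h, hq s]
    · rw [mul_sub, mul_div_cancel₀ _ h.ne', mul_one]
  calc entropy μ X = ∑ ω, μ.p ω * -Real.log (p (X ω)) := entropy_eq_sum_mul_neg_log μ X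
    _ ≤ ∑ ω, (μ.p ω * -Real.log (q (X ω)) + μ.p ω * (q (X ω) / p (X ω) - 1)) :=
        Finset.sum_le_sum fun ω _ => hω ω
    _ = ∑ ω, μ.p ω * -Real.log (q (X ω)) + ∑ s ∈ F, p s * (q s / p s - 1) := by
        rw [Finset.sum_add_distrib, sum_prob_mul μ hF]
    _ ≤ ∑ ω, μ.p ω * -Real.log (q (X ω)) + (∑ s ∈ F, q s - ∑ s ∈ F, p s) := by
        linarith [Finset.sum_le_sum hs, Finset.sum_sub_distrib (s := F) q p]
    _ ≤ ∑ ω, μ.p ω * -Real.log (q (X ω)) := by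
        rw [sum_prob μ hF]
        linarith

lemma entropy_submodular (A : Ω → S) (B : Ω → T) (C : Ω → U) :
    entropy μ (fun ω => (A ω, B ω, C ω)) + entropy μ C
      ≤ entropy μ (fun ω => (A ω, C ω)) + entropy μ (fun ω => (B ω, C ω)) := by
  -- `q` is the law of `(A, B, C)` under which `A` and `B` are conditionally independent given `C`
  set q : S × T × U → ℝ := fun x =>
    prob μ (fun ω => (A ω, C ω)) (x.1, x.2.2) * prob μ (fun ω => (B ω, C ω)) (x.2.1, x.2.2)
      / prob μ C x.2.2
  have hF : ∀ ω,
      (A ω, B ω, C ω) ∈ Finset.univ.image A ×ˢ Finset.univ.image B ×ˢ Finset.univ.image C :=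
    fun ω => Finset.mem_product.2 ⟨mem_image_univ_self A ω,
      Finset.mem_product.2 ⟨mem_image_univ_self B ω, mem_image_univ_self C ω⟩⟩
  have hq_nonneg : ∀ x, 0 ≤ q x := fun x =>
    div_nonneg (mul_nonneg (prob_nonneg μ _ _) (prob_nonneg μ _ _)) (prob_nonneg μ _ _)
  have hq_sum :
      ∑ x ∈ Finset.univ.image A ×ˢ Finset.univ.image B ×ˢ Finset.univ.image C, q x = 1 := by
    rw [Finset.sum_product]
    simp_rw [Finset.sum_product_right]
    rw [Finset.sum_comm]
    refine (Finset.sum_congr rfl fun c _ => ?_).trans (sum_prob μ (mem_image_univ_self C))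
    simp_rw [q, ← Finset.sum_div, ← Finset.mul_sum, sum_prob_pair_left μ (mem_image_univ_self B),
      ← Finset.sum_mul, sum_prob_pair_left μ (mem_image_univ_self A), mul_self_div_self]
  have hq_pos : ∀ ω, 0 < μ.p ω → 0 < q (A ω, B ω, C ω) := fun ω hω =>
    div_pos (mul_pos (prob_apply_pos μ hω) (prob_apply_pos μ hω)) (prob_apply_pos μ hω)
  have hcross := entropy_le_sum_mul_neg_log μ hF hq_nonneg hq_sum.le hq_pos
  have hsplit : ∑ ω, μ.p ω * -Real.log (q (A ω, B ω, C ω))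
      = entropy μ (fun ω => (A ω, C ω)) + entropy μ (fun ω => (B ω, C ω)) - entropy μ C := by
    simp_rw [entropy_eq_sum_mul_neg_log, ← Finset.sum_add_distrib, ← Finset.sum_sub_distrib]
    refine Finset.sum_congr rfl fun ω _ => ?_
    rcases (μ.nonneg ω).eq_or_lt with hω | hω
    · simp [← hω]
    · have h1 : 0 < prob μ (fun ω => (A ω, C ω)) (A ω, C ω) := prob_apply_pos μ hω
      have h2 : 0 < prob μ (fun ω => (B ω, C ω)) (B ω, C ω) := prob_apply_pos μ hω
      have h3 : 0 < prob μ C (C ω) := prob_apply_pos μ hω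
      simp only [q]
      rw [Real.log_div (mul_pos h1 h2).ne' h3.ne', Real.log_mul h1.ne' h2.ne']
      ring
  linarith

end Prob

section Independence

variable {Ω Ω' S T U S' T' : Type*} [Fintype Ω] [Fintype Ω'] {μ : FinProb Ω} {ν : FinProb Ω'}

lemma IndepRV.symm {A : Ω → S} {B : Ω → T} (h : IndepRV μ A B) : IndepRV μ B A := by
  intro t s
  calc prob μ (fun ω => (B ω, A ω)) (t, s) = prob μ (fun ω => (A ω, B ω)) (s, t) :=
        prob_comp_of_injective μ (fun ω => (A ω, B ω)) Prod.swap_injective (s, t)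
    _ = prob μ B t * prob μ A s := by rw [h s t, mul_comm]

lemma IndepRV.comp {A : Ω → S} {B : Ω → T} (h : IndepRV μ A B) (f : S → S') (g : T → T') :
    IndepRV μ (fun ω => f (A ω)) (fun ω => g (B ω)) := by
  intro s t
  refine (prob_comp μ (X := fun ω => (A ω, B ω))
    (fun ω => Finset.mem_product.2 ⟨mem_image_univ_self A ω, mem_image_univ_self B ω⟩)
    (fun x => (f x.1, g x.2)) (s, t)).trans ?_
  rw [prob_comp μ (mem_image_univ_self A), prob_comp μ (mem_image_univ_self B),
    Finset.sum_product, Finset.sum_mul_sum]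
  refine Finset.sum_congr rfl fun a _ => Finset.sum_congr rfl fun b _ => ?_
  rw [h a b]
  simp only [Prod.mk.injEq, ite_and]
  split_ifs <;> ring

lemma IndepRV.pair_left {A : Ω → S} {B : Ω → T} {C : Ω → U}
    (hA : IndepRV μ A (fun ω => (B ω, C ω))) (hBC : IndepRV μ B C) :
    IndepRV μ (fun ω => (A ω, B ω)) C := by
  have hAB : IndepRV μ A B := hA.comp id Prod.fst
  rintro ⟨a, b⟩ c
  calc prob μ (fun ω => ((A ω, B ω), C ω)) ((a, b), c)
      = prob μ (fun ω => (A ω, (B ω, C ω))) (a, (b, c)) :=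
        (prob_comp_of_injective μ _ (Equiv.prodAssoc S T U).injective ((a, b), c)).symm
    _ = prob μ (fun ω => (A ω, B ω)) (a, b) * prob μ C c := by
        rw [hA a (b, c), hBC b c, hAB a b, mul_assoc]

lemma IndepRV.pair_right {A : Ω → S} {B : Ω → T} {C : Ω → U}
    (hAB_C : IndepRV μ (fun ω => (A ω, B ω)) C) (hAB : IndepRV μ A B) :
    IndepRV μ A (fun ω => (B ω, C ω)) := by
  have hBC : IndepRV μ B C := hAB_C.comp Prod.snd id
  rintro a ⟨b, c⟩
  calc prob μ (fun ω => (A ω, (B ω, C ω))) (a, (b, c))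
      = prob μ (fun ω => ((A ω, B ω), C ω)) ((a, b), c) :=
        (prob_comp_of_injective μ _ (Equiv.prodAssoc S T U).symm.injective (a, b, c)).symm
    _ = prob μ A a * prob μ (fun ω => (B ω, C ω)) (b, c) := by
        rw [hAB_C (a, b) c, hAB a b, hBC b c, mul_assoc]

lemma entropy_congr {X : Ω → S} {Y : Ω' → S} (h : IdentDist μ X ν Y) :
    entropy μ X = entropy ν Y := by
  rw [entropy_eq_sum_negMulLog μ (F := Finset.univ.image X ∪ Finset.univ.image Y)
      fun ω => Finset.mem_union_left _ (mem_image_univ_self X ω),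
    entropy_eq_sum_negMulLog ν
      fun ω => Finset.mem_union_right _ (mem_image_univ_self Y ω)]
  exact Finset.sum_congr rfl fun s _ => by rw [h s]

lemma IdentDist.comp {X : Ω → S} {Y : Ω' → S} (h : IdentDist μ X ν Y) (f : S → T) :
    IdentDist μ (fun ω => f (X ω)) ν (fun ω => f (Y ω)) := by
  intro t
  rw [prob_comp μ (F := Finset.univ.image X ∪ Finset.univ.image Y)
      (fun ω => Finset.mem_union_left _ (mem_image_univ_self X ω)),
    prob_comp ν fun ω => Finset.mem_union_right _ (mem_image_univ_self Y ω)]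
  exact Finset.sum_congr rfl fun s _ => by rw [h s]

lemma IndepRV.of_identDist {A : Ω → S} {B : Ω → T} {A' : Ω' → S} {B' : Ω' → T}
    (h : IdentDist μ (fun ω => (A ω, B ω)) ν (fun ω => (A' ω, B' ω))) (h' : IndepRV ν A' B') :
    IndepRV μ A B := by
  intro a b
  have hA : prob μ A a = prob ν A' a := h.comp Prod.fst a
  have hB : prob μ B b = prob ν B' b := h.comp Prod.snd b
  rw [h (a, b), h' a b, hA, hB]

lemma IdentDist.pair_of_indep {A : Ω → S} {B : Ω → T} {A' : Ω' → S} {B' : Ω' → T}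
    (hAB : IndepRV μ A B) (hAB' : IndepRV ν A' B') (hA : IdentDist μ A ν A')
    (hB : IdentDist μ B ν B') :
    IdentDist μ (fun ω => (A ω, B ω)) ν (fun ω => (A' ω, B' ω)) := by
  rintro ⟨a, b⟩
  rw [hAB a b, hAB' a b, hA a, hB b]

end Independence

section IndepFam

variable {Ω S T : Type*} [Fintype Ω] {μ : FinProb Ω} {m : ℕ}

lemma prob_head_tail (V : Fin (m + 1) → Ω → S) (x : S) (g : Fin m → S) :
    prob μ (fun ω => (V 0 ω, fun i : Fin m => V i.succ ω)) (x, g)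
      = prob μ (fun ω i => V i ω) (Fin.cons x g) := by
  have h := prob_comp_of_injective μ (fun ω i => V i ω)
    (Fin.consEquiv fun _ => S).symm.injective (Fin.cons x g)
  simp only [Fin.consEquiv_symm_apply, Fin.cons_zero, Fin.tail_cons] at h
  exact h

lemma IndepFam.tail {V : Fin (m + 1) → Ω → S} (h : IndepFam μ V) :
    IndepFam μ (fun i : Fin m => V i.succ) := by
  intro g
  rw [← sum_prob_pair_left μ (A := V 0) (F := Finset.univ.image (V 0))
    (mem_image_univ_self (V 0)) g]
  simp_rw [prob_head_tail, h _, Fin.prod_univ_succ, Fin.cons_zero, Fin.cons_succ, ← Finset.sum_mul]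
  rw [sum_prob μ (mem_image_univ_self (V 0)), one_mul]

lemma IndepFam.indepRV_head_tail {V : Fin (m + 1) → Ω → S} (h : IndepFam μ V) :
    IndepRV μ (V 0) (fun ω (i : Fin m) => V i.succ ω) := by
  intro x g
  rw [prob_head_tail, h, Fin.prod_univ_succ, h.tail g]
  simp only [Fin.cons_zero, Fin.cons_succ]

lemma IndepFam.indepRV_fst_snd_tail {Xc : Fin (m + 1) → Ω → S} {Yc : Fin (m + 1) → Ω → T}
    (hindep : IndepFam μ (fun i ω => (Xc i ω, Yc i ω))) (h0 : IndepRV μ (Xc 0) (Yc 0)) :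
    IndepRV μ (Xc 0) (fun ω => (Yc 0 ω, fun i : Fin m => (Xc i.succ ω, Yc i.succ ω))) :=
  hindep.indepRV_head_tail.pair_right h0

end IndepFam

section AddCommGroup

variable {Ω Ω' Ω₀ G : Type*} [Fintype Ω] [Fintype Ω'] [Fintype Ω₀] [AddCommGroup G] {μ : FinProb Ω}

lemma entropy_add_congr {ν : FinProb Ω'} {A B : Ω → G} {A' B' : Ω' → G}
    (hAB : IndepRV μ A B) (hAB' : IndepRV ν A' B') (hA : IdentDist μ A ν A')
    (hB : IdentDist μ B ν B') :
    entropy μ (fun ω => A ω + B ω) = entropy ν (fun ω => A' ω + B' ω) :=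
  entropy_congr ((IdentDist.pair_of_indep hAB hAB' hA hB).comp fun p => p.1 + p.2)

theorem kaimanovich_vershik {A B C : Ω → G} (hA : IndepRV μ A (fun ω => (B ω, C ω)))
    (hBC : IndepRV μ B C) :
    entropy μ (fun ω => A ω + B ω + C ω) + entropy μ B
      ≤ entropy μ (fun ω => A ω + B ω) + entropy μ (fun ω => B ω + C ω) := by
  have hA_BC : IndepRV μ A (fun ω => B ω + C ω) := hA.comp id fun p => p.1 + p.2
  have hC_AB : IndepRV μ C (fun ω => A ω + B ω) :=
    (hA.pair_left hBC).symm.comp id fun p => p.1 + p.2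
  have hABC : entropy μ (fun ω => (A ω, C ω, A ω + B ω + C ω))
      = entropy μ A + entropy μ B + entropy μ C := by
    have hinj : (fun p : G × G × G => (p.1, p.2.2, p.1 + p.2.1 + p.2.2)).Injective := by
      rintro ⟨a, b, c⟩ ⟨a', b', c'⟩ h
      simp only [Prod.mk.injEq] at h
      obtain ⟨rfl, rfl, h⟩ := h
      simp_all
    rw [entropy_comp_of_injective μ (fun ω => (A ω, B ω, C ω)) hinj, entropy_pair_of_indep μ hA,
      entropy_pair_of_indep μ hBC, add_assoc]
  have hA_ABC : entropy μ (fun ω => (A ω, A ω + B ω + C ω))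
      = entropy μ A + entropy μ (fun ω => B ω + C ω) := by
    have hinj : (fun p : G × G => (p.1, p.1 + p.2)).Injective := by
      rintro ⟨a, x⟩ ⟨a', x'⟩ h
      simp only [Prod.mk.injEq] at h
      obtain ⟨rfl, h⟩ := h
      simp_all
    have := entropy_comp_of_injective μ (fun ω => (A ω, B ω + C ω)) hinj
    simp only [← add_assoc] at this
    rw [this, entropy_pair_of_indep μ hA_BC]
  have hC_ABC : entropy μ (fun ω => (C ω, A ω + B ω + C ω))
      = entropy μ C + entropy μ (fun ω => A ω + B ω) := by
    have hinj : (fun p : G × G => (p.1, p.2 + p.1)).Injective := by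
      rintro ⟨c, x⟩ ⟨c', x'⟩ h
      simp only [Prod.mk.injEq] at h
      obtain ⟨rfl, h⟩ := h
      simp_all
    rw [entropy_comp_of_injective μ (fun ω => (C ω, A ω + B ω)) hinj,
      entropy_pair_of_indep μ hC_AB]
  have := entropy_submodular μ A C (fun ω => A ω + B ω + C ω)
  linarith

theorem entropy_add_add_add_le {A B C D : Ω → G}
    (hA : IndepRV μ A (fun ω => (B ω, C ω, D ω))) (hB : IndepRV μ B (fun ω => (C ω, D ω)))
    (hC : IndepRV μ C D) :
    entropy μ (fun ω => A ω + B ω + C ω + D ω) + entropy μ B + entropy μ C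
      ≤ entropy μ (fun ω => A ω + B ω) + entropy μ (fun ω => B ω + C ω)
        + entropy μ (fun ω => C ω + D ω) := by
  have hA' : IndepRV μ A (fun ω => (B ω, C ω + D ω)) := hA.comp id fun p => (p.1, p.2.1 + p.2.2)
  have hB' : IndepRV μ B (fun ω => C ω + D ω) := hB.comp id fun p => p.1 + p.2
  have h1 := kaimanovich_vershik hA' hB'
  have h2 := kaimanovich_vershik hB hC
  simp only [← add_assoc] at h1
  linarith

lemma entropy_sum_le_entropy_sum_tail_add {μ₀ : FinProb Ω₀} {X Y : Ω₀ → G}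
    (hXY : IndepRV μ₀ X Y) {n : ℕ} {Xc Yc : Fin (n + 1 + 1) → Ω → G}
    (hindep : IndepFam μ (fun i ω => (Xc i ω, Yc i ω)))
    (hcopy : ∀ i, IdentDist μ (fun ω => (Xc i ω, Yc i ω)) μ₀ (fun ω => (X ω, Y ω))) :
    entropy μ (fun ω => ∑ i, (Xc i ω + Yc i ω)) ≤
      entropy μ (fun ω => ∑ i : Fin (n + 1), (Xc i.succ ω + Yc i.succ ω))
        + (2 * entropy μ₀ (fun ω => X ω + Y ω) - entropy μ₀ X - entropy μ₀ Y) := by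
  have hXY₀ : IndepRV μ (Xc 0) (Yc 0) := .of_identDist (hcopy 0) hXY
  have hXY₁ : IndepRV μ (Xc (Fin.succ 0)) (Yc (Fin.succ 0)) := .of_identDist (hcopy _) hXY
  have hA : IndepRV μ (Xc 0) (fun ω => (Yc 0 ω, Xc (Fin.succ 0) ω,
      Yc (Fin.succ 0) ω + ∑ i : Fin n, (Xc i.succ.succ ω + Yc i.succ.succ ω))) :=
    (hindep.indepRV_fst_snd_tail hXY₀).comp id fun p =>
      (p.1, (p.2 0).1, (p.2 0).2 + ∑ i : Fin n, ((p.2 i.succ).1 + (p.2 i.succ).2))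
  have hB : IndepRV μ (Yc 0) (fun ω => (Xc (Fin.succ 0) ω,
      Yc (Fin.succ 0) ω + ∑ i : Fin n, (Xc i.succ.succ ω + Yc i.succ.succ ω))) :=
    hindep.indepRV_head_tail.comp Prod.snd fun t =>
      ((t 0).1, (t 0).2 + ∑ i : Fin n, ((t i.succ).1 + (t i.succ).2))
  have hC : IndepRV μ (Xc (Fin.succ 0))
      (fun ω => Yc (Fin.succ 0) ω + ∑ i : Fin n, (Xc i.succ.succ ω + Yc i.succ.succ ω)) :=
    (hindep.tail.indepRV_fst_snd_tail hXY₁).comp id fun p =>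
      p.1 + ∑ i : Fin n, ((p.2 i).1 + (p.2 i).2)
  have hfour := entropy_add_add_add_le hA hB hC
  have hS₀ : entropy μ (fun ω => Xc 0 ω + Yc 0 ω) = entropy μ₀ (fun ω => X ω + Y ω) :=
    entropy_congr ((hcopy 0).comp fun p => p.1 + p.2)
  have hYX : entropy μ (fun ω => Yc 0 ω + Xc (Fin.succ 0) ω) = entropy μ₀ (fun ω => X ω + Y ω) := by
    have hYX₀ : IndepRV μ (Yc 0) (Xc (Fin.succ 0)) := hB.comp id Prod.fst
    rw [entropy_add_congr hYX₀ hXY.symm ((hcopy 0).comp Prod.snd) ((hcopy _).comp Prod.fst)]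
    simp only [add_comm]
  have hY₀ : entropy μ (Yc 0) = entropy μ₀ Y := entropy_congr ((hcopy 0).comp Prod.snd)
  have hX₁ : entropy μ (Xc (Fin.succ 0)) = entropy μ₀ X := entropy_congr ((hcopy _).comp Prod.fst)
  simp only [Fin.sum_univ_succ]
  simp only [← add_assoc] at hfour ⊢
  linarith

end AddCommGroup

/-- if `(X_i, Y_i)`, `i = 0, …, n`, are jointly independent copies of a
pair `(X, Y)` of independent random variables, and `S_i = X_i + Y_i`, then
`H(S_0 + … + S_n) ≤ (2n+1)·H(X+Y) − n·H(X) − n·H(Y)`. -/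
theorem entropy_iterated_sum_le {G Ω₀ Ω : Type*} [AddCommGroup G] [Fintype Ω₀] [Fintype Ω]
    (μ₀ : FinProb Ω₀) (X Y : Ω₀ → G) (hXY : IndepRV μ₀ X Y)
    (n : ℕ) (μ : FinProb Ω) (Xc Yc : Fin (n + 1) → Ω → G)
    (hindep : IndepFam μ (fun i ω => (Xc i ω, Yc i ω)))
    (hcopy : ∀ i, IdentDist μ (fun ω => (Xc i ω, Yc i ω)) μ₀ (fun ω => (X ω, Y ω))) :
    entropy μ (fun ω => ∑ i, (Xc i ω + Yc i ω)) ≤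
      (2 * (n : ℝ) + 1) * entropy μ₀ (fun ω => X ω + Y ω)
        - (n : ℝ) * entropy μ₀ X - (n : ℝ) * entropy μ₀ Y := by
  induction n with
  | zero =>
    have h : entropy μ (fun ω => Xc 0 ω + Yc 0 ω) = entropy μ₀ (fun ω => X ω + Y ω) :=
      entropy_congr ((hcopy 0).comp fun p => p.1 + p.2)
    simpa using h.le
  | succ n ih =>
    have hstep := entropy_sum_le_entropy_sum_tail_add hXY hindep hcopy
    have htail := ih (fun i => Xc i.succ) (fun i => Yc i.succ) hindep.tail fun i => hcopy i.succ
    push_cast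
    linarith
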